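/- Let γ_j, γ_l, γ_m be nonzero reals with γ_j + γ_l + γ_m = 0, and let χ_j, χ_l, χ_m be smooth real functions on 𝕋ⁿ satisfying −div(ρ₀ ∇χ_k) = γ_k² χ_k for k ∈ {j,l,m}, with ρ₀ smooth positive. Then the resonance sum I₁ + I₂ + I₃ vanishes, where I₁ + I₂ = ∫ [γ_j² χ_j ∇χ_l·∇χ_m + γ_l² χ_l ∇χ_j·∇χ_m + γ_m² χ_m ∇χ_j·∇χ_l] dx (times the common prefactor 1/(γ_j γ_l γ_m)) and I₃ = ∫ [γ_m^{-1} ∇(χ_j χ_l)·∇χ_m + γ_j^{-1} ∇(χ_l χ_m)·∇χ_j + γ_l^{-1} ∇(χ_j χ_m)·∇χ_l] dx; that is, (γ_j γ_l γ_m)^{-1} ∫ [γ_j² χ_j ∇χ_l·∇χ_m + γ_l² χ_l ∇χ_j·∇χ_m + γ_m² χ_m ∇χ_j·∇χ_l] dx + I₃ = 0. -/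

import Mathlib

open MeasureTheory

/-- Partial derivative `∂ᵢ f` of a real function on `ℝⁿ`. -/
noncomputable def pd {n : ℕ} (f : (Fin n → ℝ) → ℝ) (i : Fin n) (x : Fin n → ℝ) : ℝ :=
  fderiv ℝ f x (Pi.single i 1)

/-- `ℤⁿ`-periodicity: functions on the torus `𝕋ⁿ`. -/
def ZPeriodic {n : ℕ} {E : Type*} (f : (Fin n → ℝ) → E) : Prop :=
  ∀ (x : Fin n → ℝ) (k : Fin n → ℤ), f (x + fun i => (k i : ℝ)) = f x


lemma pd_mul' {n : ℕ} {f g : (Fin n → ℝ) → ℝ} (hf : Differentiable ℝ f)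
    (hg : Differentiable ℝ g) (i : Fin n) (x : Fin n → ℝ) :
    pd (fun y => f y * g y) i x = f x * pd g i x + g x * pd f i x := by
  unfold pd
  rw [fderiv_fun_mul (hf x) (hg x)]
  simp

/-- Fundamental domain `[0,1)ⁿ` of the torus. -/
def unitCube (n : ℕ) : Set (Fin n → ℝ) := Set.univ.pi fun _ : Fin n => Set.Ico (0:ℝ) 1

/-- Oscillation–cancellation at resonances: if `γ_j + γ_l + γ_m = 0` (all nonzero)
and `−div(ρ₀∇χ_k) = γ_k² χ_k` for `k ∈ {j,l,m}`, then
`(γ_jγ_lγ_m)⁻¹ ∫ [γ_j² χ_j ∇χ_l·∇χ_m + γ_l² χ_l ∇χ_j·∇χ_m + γ_m² χ_m ∇χ_j·∇χ_l] dx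
+ ∫ [γ_m⁻¹ ∇(χ_jχ_l)·∇χ_m + γ_j⁻¹ ∇(χ_lχ_m)·∇χ_j + γ_l⁻¹ ∇(χ_jχ_m)·∇χ_l] dx = 0`. -/
theorem stmt_18 {n : ℕ} (ρ₀ : (Fin n → ℝ) → ℝ)
    (hρreg : ContDiff ℝ (⊤ : ℕ∞) ρ₀) (hρpos : ∀ x, 0 < ρ₀ x) (hρper : ZPeriodic ρ₀)
    (γj γl γm : ℝ) (hγj : γj ≠ 0) (hγl : γl ≠ 0) (hγm : γm ≠ 0)
    (hres : γj + γl + γm = 0)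
    (χj χl χm : (Fin n → ℝ) → ℝ)
    (hχjreg : ContDiff ℝ (⊤ : ℕ∞) χj) (hχlreg : ContDiff ℝ (⊤ : ℕ∞) χl) (hχmreg : ContDiff ℝ (⊤ : ℕ∞) χm)
    (hχjper : ZPeriodic χj) (hχlper : ZPeriodic χl) (hχmper : ZPeriodic χm)
    (heigj : ∀ x, -∑ i, pd (fun y => ρ₀ y * pd χj i y) i x = γj ^ 2 * χj x)
    (heigl : ∀ x, -∑ i, pd (fun y => ρ₀ y * pd χl i y) i x = γl ^ 2 * χl x)
    (heigm : ∀ x, -∑ i, pd (fun y => ρ₀ y * pd χm i y) i x = γm ^ 2 * χm x) :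
    (γj * γl * γm)⁻¹ *
      (∫ x in unitCube n,
        (γj ^ 2 * χj x * ∑ i, pd χl i x * pd χm i x +
         γl ^ 2 * χl x * ∑ i, pd χj i x * pd χm i x +
         γm ^ 2 * χm x * ∑ i, pd χj i x * pd χl i x)) +
    (∫ x in unitCube n,
        (γm⁻¹ * ∑ i, pd (fun y => χj y * χl y) i x * pd χm i x +
         γj⁻¹ * ∑ i, pd (fun y => χl y * χm y) i x * pd χj i x +
         γl⁻¹ * ∑ i, pd (fun y => χj y * χm y) i x * pd χl i x)) = 0 := by
  have hj := hχjreg.differentiable (by simp)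
  have hl := hχlreg.differentiable (by simp)
  have hm := hχmreg.differentiable (by simp)
  set c : ℝ := (γj * γl * γm)⁻¹ with hc
  have key : ∀ x : Fin n → ℝ,
      (γm⁻¹ * ∑ i, pd (fun y => χj y * χl y) i x * pd χm i x +
       γj⁻¹ * ∑ i, pd (fun y => χl y * χm y) i x * pd χj i x +
       γl⁻¹ * ∑ i, pd (fun y => χj y * χm y) i x * pd χl i x) =
      -(c *
        (γj ^ 2 * χj x * ∑ i, pd χl i x * pd χm i x +
         γl ^ 2 * χl x * ∑ i, pd χj i x * pd χm i x +
         γm ^ 2 * χm x * ∑ i, pd χj i x * pd χl i x)) := by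
    intro x
    simp only [pd_mul' hj hl, pd_mul' hl hm, pd_mul' hj hm, add_mul,
      Finset.sum_add_distrib, mul_assoc, ← Finset.mul_sum]
    have c1 : ∑ i, pd χm i x * pd χj i x = ∑ i, pd χj i x * pd χm i x := by
      simp [mul_comm]
    have c2 : ∑ i, pd χl i x * pd χj i x = ∑ i, pd χj i x * pd χl i x := by
      simp [mul_comm]
    have c3 : ∑ i, pd χm i x * pd χl i x = ∑ i, pd χl i x * pd χm i x := by
      simp [mul_comm]
    rw [c1, c2, c3, hc]
    have hm' : γm = -γj - γl := by linarith
    subst hm'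
    have h : -γj - γl ≠ 0 := hγm
    field_simp
    ring
  have h2 : (∫ x in unitCube n,
        (γm⁻¹ * ∑ i, pd (fun y => χj y * χl y) i x * pd χm i x +
         γj⁻¹ * ∑ i, pd (fun y => χl y * χm y) i x * pd χj i x +
         γl⁻¹ * ∑ i, pd (fun y => χj y * χm y) i x * pd χl i x)) =
      -(c * (∫ x in unitCube n,
        (γj ^ 2 * χj x * ∑ i, pd χl i x * pd χm i x +
         γl ^ 2 * χl x * ∑ i, pd χj i x * pd χm i x +
         γm ^ 2 * χm x * ∑ i, pd χj i x * pd χl i x))) := by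
    calc (∫ x in unitCube n,
        (γm⁻¹ * ∑ i, pd (fun y => χj y * χl y) i x * pd χm i x +
         γj⁻¹ * ∑ i, pd (fun y => χl y * χm y) i x * pd χj i x +
         γl⁻¹ * ∑ i, pd (fun y => χj y * χm y) i x * pd χl i x))
        = (∫ x in unitCube n, -(c *
          (γj ^ 2 * χj x * ∑ i, pd χl i x * pd χm i x +
           γl ^ 2 * χl x * ∑ i, pd χj i x * pd χm i x +
           γm ^ 2 * χm x * ∑ i, pd χj i x * pd χl i x))) := by
          exact integral_congr_ae (Filter.Eventually.of_forall fun x => key x)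
      _ = -(c * (∫ x in unitCube n,
          (γj ^ 2 * χj x * ∑ i, pd χl i x * pd χm i x +
           γl ^ 2 * χl x * ∑ i, pd χj i x * pd χm i x +
           γm ^ 2 * χm x * ∑ i, pd χj i x * pd χl i x))) := by
          rw [integral_neg, integral_const_mul]
  rw [h2]
  ring
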